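/- arXiv:1606.00142 — 3 statements merged into one kernel-verified Lean document; each statement's English description precedes it below -/
import Mathlib

section
/- Let n_t, n_s, p be positive integers, let X_t be a real n_t × p matrix, X_s a real n_s × p matrix, Y_t ∈ ℝ^{n_t}, Y_s ∈ ℝ^{n_s}, and b_train, b_Lasso ∈ ℝ^p. Let ε ∈ [0, 1) and ς ≥ 0, and define e_t = Y_t − X_t b_train and e_s = Y_s − X_s b_train. Assume (i) (1/n_s)·‖Y_s − X_s b_Lasso‖₂² ≤ (1/n_t)·‖e_t‖₂²/(1 − √ε) + ς, and (ii) ‖b_Lasso‖₁ ≤ ‖b_train‖₁. Then (1/n_s)·‖X_s (b_train − b_Lasso)‖₂² ≤ ( (1/n_t)·‖e_t‖₂²/(1 − √ε) − (1/n_s)·‖e_s‖₂² ) + (4/n_s)·‖X_sᵀ e_s‖_∞·‖b_train‖₁ + ς. -/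
/-- The squared Euclidean (ℓ2) norm of a vector. -/
noncomputable def l2normSq {m : ℕ} (v : Fin m → ℝ) : ℝ := ∑ i, (v i) ^ 2

/-- The ℓ1 norm of a vector. -/
noncomputable def l1norm {m : ℕ} (v : Fin m → ℝ) : ℝ := ∑ i, |v i|

/-- The ℓ∞ norm of a vector. -/
noncomputable def linftyNorm {m : ℕ} (v : Fin m → ℝ) : ℝ := ⨆ i, |v i|

/-- deterministic content of Theorem 2: if the Lasso estimator satisfies the
VC generalization-error bound (i) and the ℓ1 shrinkage property (ii), then the mean squared
distance on the test set between the extremum-estimator prediction and the Lasso prediction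
is bounded by overfitting, cross-term, and sampling-error terms. -/
theorem lasso_prediction_bound
    (nt ns p : ℕ) (hnt : 0 < nt) (hns : 0 < ns) (hp : 0 < p)
    (Xt : Matrix (Fin nt) (Fin p) ℝ) (Xs : Matrix (Fin ns) (Fin p) ℝ)
    (Yt : Fin nt → ℝ) (Ys : Fin ns → ℝ) (btrain bLasso : Fin p → ℝ)
    (ε ς : ℝ) (hε0 : 0 ≤ ε) (hε1 : ε < 1) (hς : 0 ≤ ς)
    (et : Fin nt → ℝ) (het : et = Yt - Xt.mulVec btrain)
    (es : Fin ns → ℝ) (hes : es = Ys - Xs.mulVec btrain)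
    (h1 : (1 / (ns : ℝ)) * l2normSq (Ys - Xs.mulVec bLasso)
            ≤ (1 / (nt : ℝ)) * l2normSq et / (1 - Real.sqrt ε) + ς)
    (h2 : l1norm bLasso ≤ l1norm btrain) :
    (1 / (ns : ℝ)) * l2normSq (Xs.mulVec (btrain - bLasso))
      ≤ ((1 / (nt : ℝ)) * l2normSq et / (1 - Real.sqrt ε) - (1 / (ns : ℝ)) * l2normSq es)
        + (4 / (ns : ℝ)) * linftyNorm (Xs.transpose.mulVec es) * l1norm btrain + ς := by

  classical
  set d : Fin p → ℝ := btrain - bLasso with hd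
  have hXd : Xs.mulVec bLasso = Xs.mulVec btrain - Xs.mulVec d := by
    rw [hd, Matrix.mulVec_sub]; ring_nf
  have hdecomp : ∀ i, (Ys - Xs.mulVec bLasso) i = es i + (Xs.mulVec d) i := by
    intro i
    simp [hXd, hes]
    ring
  set M : ℝ := linftyNorm (Xs.transpose.mulVec es) with hM
  have hMle : ∀ j, |(Xs.transpose.mulVec es) j| ≤ M := by
    intro j
    have : Nonempty (Fin p) := ⟨⟨0, hp⟩⟩
    rw [hM, linftyNorm]
    exact le_ciSup (f := fun i => |Xs.transpose.mulVec es i|) (Set.Finite.bddAbove (Set.finite_range _)) j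
  set inn : ℝ := ∑ i, es i * (Xs.mulVec d) i with hinn
  have hswap : inn = ∑ j, (Xs.transpose.mulVec es) j * d j := by
    simp only [hinn, Matrix.mulVec, Matrix.transpose_apply, dotProduct,
      Finset.mul_sum, Finset.sum_mul]
    rw [Finset.sum_comm]
    apply Finset.sum_congr rfl
    intro j _
    apply Finset.sum_congr rfl
    intro i _
    ring
  have habs : |inn| ≤ M * l1norm d := by
    rw [hswap]
    calc |∑ j, (Xs.transpose.mulVec es) j * d j| ≤ ∑ j, |(Xs.transpose.mulVec es) j * d j| :=
          Finset.abs_sum_le_sum_abs _ _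
      _ ≤ ∑ j, M * |d j| := by
          apply Finset.sum_le_sum
          intro j _
          rw [abs_mul]
          exact mul_le_mul_of_nonneg_right (hMle j) (abs_nonneg _)
      _ = M * l1norm d := by rw [l1norm, Finset.mul_sum]
  have hd1 : l1norm d ≤ 2 * l1norm btrain := by
    have : l1norm d ≤ l1norm btrain + l1norm bLasso := by
      simp only [l1norm, hd, Pi.sub_apply, ← Finset.sum_add_distrib]
      exact Finset.sum_le_sum fun j _ => abs_sub _ _
    linarith
  have hMnn : 0 ≤ M := le_trans (abs_nonneg _) (hMle ⟨0, hp⟩)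
  have habs2 : |inn| ≤ 2 * M * l1norm btrain := by
    calc |inn| ≤ M * l1norm d := habs
      _ ≤ M * (2 * l1norm btrain) := mul_le_mul_of_nonneg_left hd1 hMnn
      _ = 2 * M * l1norm btrain := by ring
  have hkey : l2normSq (Ys - Xs.mulVec bLasso)
      = l2normSq es + 2 * inn + l2normSq (Xs.mulVec d) := by
    simp only [l2normSq, hinn, Finset.mul_sum, ← Finset.sum_add_distrib]
    apply Finset.sum_congr rfl
    intro i _
    rw [hdecomp i]
    ring
  have hnspos : (0:ℝ) < ns := Nat.cast_pos.mpr hns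
  have hns' : (0:ℝ) ≤ 1 / (ns:ℝ) := by positivity
  have hinn_lb : -(2 * M * l1norm btrain) ≤ inn := neg_le_of_abs_le habs2
  have h3 : (1 / (ns : ℝ)) * l2normSq (Xs.mulVec d)
      ≤ (1 / (ns : ℝ)) * l2normSq (Ys - Xs.mulVec bLasso)
        - (1 / (ns : ℝ)) * l2normSq es + (4 / (ns : ℝ)) * M * l1norm btrain := by
    have := mul_le_mul_of_nonneg_left hinn_lb hns'
    rw [hkey]
    have h4 : (4 / (ns : ℝ)) * M * l1norm btrain
        = (1 / (ns : ℝ)) * (2 * (2 * M * l1norm btrain)) := by ring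
    rw [h4]
    nlinarith [this]
  calc (1 / (ns : ℝ)) * l2normSq (Xs.mulVec (btrain - bLasso))
      = (1 / (ns : ℝ)) * l2normSq (Xs.mulVec d) := rfl
    _ ≤ (1 / (ns : ℝ)) * l2normSq (Ys - Xs.mulVec bLasso)
        - (1 / (ns : ℝ)) * l2normSq es + (4 / (ns : ℝ)) * M * l1norm btrain := h3
    _ ≤ ((1 / (nt : ℝ)) * l2normSq et / (1 - Real.sqrt ε) - (1 / (ns : ℝ)) * l2normSq es)
        + (4 / (ns : ℝ)) * linftyNorm (Xs.transpose.mulVec es) * l1norm btrain + ς := by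
        rw [← hM]; linarith
end

section
/- Let n_t, n_s, p be positive integers, let X_t be a real n_t × p matrix, X_s a real n_s × p matrix, Y_t ∈ ℝ^{n_t}, Y_s ∈ ℝ^{n_s}, and b_train, b_Lasso ∈ ℝ^p. Let ε ∈ [0, 1) and ς ≥ 0, and define e_t = Y_t − X_t b_train and e_s = Y_s − X_s b_train. Assume (i) (1/n_s)·‖Y_s − X_s b_Lasso‖₂² ≤ (1/n_t)·‖e_t‖₂²/(1 − √ε) + ς, (ii) ‖b_Lasso‖₁ ≤ ‖b_train‖₁, and (iii) there is ρ > 0 such that ρ·‖v‖₂² ≤ (1/n_s)·‖X_s v‖₂² for every v ∈ ℝ^p. Then ‖b_train − b_Lasso‖₂ ≤ √( | (1/n_t)·‖e_t‖₂²/(1 − √ε) − (1/n_s)·‖e_s‖₂² | / ρ ) + √( (4/(ρ·n_s))·‖X_sᵀ e_s‖_∞·‖b_train‖₁ ) + √( ς/ρ ). -/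
lemma my_sqrt_add_le (a b : ℝ) (ha : 0 ≤ a) (hb : 0 ≤ b) :
    Real.sqrt (a + b) ≤ Real.sqrt a + Real.sqrt b := by
  have h1 := Real.sq_sqrt ha
  have h2 := Real.sq_sqrt hb
  have h3 := Real.sqrt_nonneg a
  have h4 := Real.sqrt_nonneg b
  have : a + b ≤ (Real.sqrt a + Real.sqrt b) ^ 2 := by nlinarith
  calc Real.sqrt (a + b) ≤ Real.sqrt ((Real.sqrt a + Real.sqrt b) ^ 2) :=
        Real.sqrt_le_sqrt this
    _ = Real.sqrt a + Real.sqrt b := Real.sqrt_sq (by positivity)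

lemma l2normSq_nonneg {m : ℕ} (v : Fin m → ℝ) : 0 ≤ l2normSq v :=
  Finset.sum_nonneg fun i _ => sq_nonneg _

lemma l1norm_nonneg {m : ℕ} (v : Fin m → ℝ) : 0 ≤ l1norm v :=
  Finset.sum_nonneg fun i _ => abs_nonneg _

lemma le_linftyNorm {m : ℕ} (v : Fin m → ℝ) (i : Fin m) : |v i| ≤ linftyNorm v := by
  unfold linftyNorm
  exact le_ciSup (f := fun j => |v j|) (Set.Finite.bddAbove (Set.finite_range _)) i

lemma linftyNorm_nonneg {m : ℕ} (hm : 0 < m) (v : Fin m → ℝ) : 0 ≤ linftyNorm v :=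
  le_trans (abs_nonneg _) (le_linftyNorm v ⟨0, hm⟩)

lemma abs_dot_le {m : ℕ} (u v : Fin m → ℝ) :
    |∑ i, u i * v i| ≤ linftyNorm u * l1norm v := by
  calc |∑ i, u i * v i| ≤ ∑ i, |u i * v i| := Finset.abs_sum_le_sum_abs _ _
    _ ≤ ∑ i, linftyNorm u * |v i| := by
        apply Finset.sum_le_sum
        intro i _
        rw [abs_mul]
        exact mul_le_mul_of_nonneg_right (le_linftyNorm u i) (abs_nonneg _)
    _ = linftyNorm u * l1norm v := by rw [l1norm, Finset.mul_sum]

/-- deterministic content of Theorem 3, the case `n ≥ p`: under the VC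
generalization-error bound (i), the ℓ1 shrinkage property (ii), and a minimal-eigenvalue
condition (iii), the ℓ2 distance between the OLS estimator and the Lasso estimator is
bounded. -/
theorem lasso_estimator_bound_min_eigenvalue
    (nt ns p : ℕ) (hnt : 0 < nt) (hns : 0 < ns) (hp : 0 < p)
    (Xt : Matrix (Fin nt) (Fin p) ℝ) (Xs : Matrix (Fin ns) (Fin p) ℝ)
    (Yt : Fin nt → ℝ) (Ys : Fin ns → ℝ) (btrain bLasso : Fin p → ℝ)
    (ε ς : ℝ) (hε0 : 0 ≤ ε) (hε1 : ε < 1) (hς : 0 ≤ ς)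
    (et : Fin nt → ℝ) (het : et = Yt - Xt.mulVec btrain)
    (es : Fin ns → ℝ) (hes : es = Ys - Xs.mulVec btrain)
    (h1 : (1 / (ns : ℝ)) * l2normSq (Ys - Xs.mulVec bLasso)
            ≤ (1 / (nt : ℝ)) * l2normSq et / (1 - Real.sqrt ε) + ς)
    (h2 : l1norm bLasso ≤ l1norm btrain)
    (ρ : ℝ) (hρ : 0 < ρ)
    (h3 : ∀ v : Fin p → ℝ, ρ * l2normSq v ≤ (1 / (ns : ℝ)) * l2normSq (Xs.mulVec v)) :
    Real.sqrt (l2normSq (btrain - bLasso))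
      ≤ Real.sqrt (|(1 / (nt : ℝ)) * l2normSq et / (1 - Real.sqrt ε)
            - (1 / (ns : ℝ)) * l2normSq es| / ρ)
        + Real.sqrt ((4 / (ρ * (ns : ℝ))) * linftyNorm (Xs.transpose.mulVec es) * l1norm btrain)
        + Real.sqrt (ς / ρ) := by
  set Δ : Fin p → ℝ := btrain - bLasso with hΔ
  set w : Fin ns → ℝ := Xs.mulVec Δ with hw
  set T : ℝ := (1 / (nt : ℝ)) * l2normSq et / (1 - Real.sqrt ε) with hT
  set L : ℝ := linftyNorm (Xs.transpose.mulVec es) with hL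
  have hnsR : (0 : ℝ) < (ns : ℝ) := Nat.cast_pos.mpr hns
  -- decomposition Ys - Xs bLasso = es + w
  have hdec : Ys - Xs.mulVec bLasso = es + w := by
    rw [hes, hw, hΔ, Matrix.mulVec_sub]
    abel
  -- expansion
  have hexp : l2normSq (es + w) = l2normSq es + 2 * (∑ i, es i * w i) + l2normSq w := by
    simp only [l2normSq, Pi.add_apply, Finset.mul_sum, ← Finset.sum_add_distrib]
    apply Finset.sum_congr rfl; intro i _; ring
  -- dot product transfer
  have hdot : ∑ i, es i * w i = ∑ j, (Xs.transpose.mulVec es) j * Δ j := by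
    have h := Matrix.dotProduct_mulVec es Xs Δ
    rw [← Matrix.mulVec_transpose] at h
    simpa [dotProduct] using h
  -- bound on |dot|
  have hdotbound : |∑ i, es i * w i| ≤ 2 * L * l1norm btrain := by
    rw [hdot]
    calc |∑ j, (Xs.transpose.mulVec es) j * Δ j| ≤ L * l1norm Δ := abs_dot_le _ _
      _ ≤ L * (l1norm btrain + l1norm bLasso) := by
          apply mul_le_mul_of_nonneg_left _ (linftyNorm_nonneg hp _)
          calc l1norm Δ = ∑ j, |btrain j - bLasso j| := by
                simp [l1norm, hΔ]
            _ ≤ ∑ j, (|btrain j| + |bLasso j|) := by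
                apply Finset.sum_le_sum; intro j _; exact abs_sub _ _
            _ = l1norm btrain + l1norm bLasso := by
                rw [l1norm, l1norm, Finset.sum_add_distrib]
      _ ≤ 2 * L * l1norm btrain := by
          have := linftyNorm_nonneg hp (Xs.transpose.mulVec es)
          nlinarith
  have hLnn : 0 ≤ L := linftyNorm_nonneg hp _
  -- key inequality
  have hkey : ρ * l2normSq Δ ≤ |T - (1 / (ns : ℝ)) * l2normSq es|
      + (4 / (ns : ℝ)) * L * l1norm btrain + ς := by
    have h3' := h3 Δ
    rw [hdec, hexp] at h1
    have habs : T - (1 / (ns : ℝ)) * l2normSq es ≤ |T - (1 / (ns : ℝ)) * l2normSq es| :=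
      le_abs_self _
    have hd : -(∑ i, es i * w i) ≤ 2 * L * l1norm btrain := by
      have := neg_abs_le (∑ i, es i * w i); linarith
    have hns' : (1 / (ns : ℝ)) * (l2normSq es + 2 * (∑ i, es i * w i) + l2normSq w)
        = (1 / (ns : ℝ)) * l2normSq es + (2 / (ns : ℝ)) * (∑ i, es i * w i)
          + (1 / (ns : ℝ)) * l2normSq w := by ring
    rw [hns'] at h1
    have h4 : (2 / (ns : ℝ)) * (-(∑ i, es i * w i)) ≤ (2 / (ns : ℝ)) * (2 * L * l1norm btrain) :=
      mul_le_mul_of_nonneg_left hd (by positivity)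
    have : (4 / (ns : ℝ)) * L * l1norm btrain = (2 / (ns : ℝ)) * (2 * L * l1norm btrain) := by
      ring
    rw [this]
    linarith
  have hdivkey : l2normSq Δ ≤ |T - (1 / (ns : ℝ)) * l2normSq es| / ρ
      + (4 / (ρ * (ns : ℝ))) * L * l1norm btrain + ς / ρ := by
    have heq : |T - (1 / (ns : ℝ)) * l2normSq es| / ρ
        + (4 / (ρ * (ns : ℝ))) * L * l1norm btrain + ς / ρ
        = (|T - (1 / (ns : ℝ)) * l2normSq es|
            + (4 / (ns : ℝ)) * L * l1norm btrain + ς) / ρ := by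
      field_simp
    rw [heq, le_div_iff₀ hρ]
    nlinarith [hkey]
  calc Real.sqrt (l2normSq Δ)
      ≤ Real.sqrt (|T - (1 / (ns : ℝ)) * l2normSq es| / ρ
          + (4 / (ρ * (ns : ℝ))) * L * l1norm btrain + ς / ρ) := Real.sqrt_le_sqrt hdivkey
    _ ≤ Real.sqrt (|T - (1 / (ns : ℝ)) * l2normSq es| / ρ
          + (4 / (ρ * (ns : ℝ))) * L * l1norm btrain) + Real.sqrt (ς / ρ) := by
        apply my_sqrt_add_le
        · have := abs_nonneg (T - (1 / (ns : ℝ)) * l2normSq es)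
          have := l1norm_nonneg btrain
          positivity
        · positivity
    _ ≤ Real.sqrt (|T - (1 / (ns : ℝ)) * l2normSq es| / ρ)
          + Real.sqrt ((4 / (ρ * (ns : ℝ))) * L * l1norm btrain) + Real.sqrt (ς / ρ) := by
        have h := my_sqrt_add_le (|T - (1 / (ns : ℝ)) * l2normSq es| / ρ)
          ((4 / (ρ * (ns : ℝ))) * L * l1norm btrain)
          (by positivity)
          (by have := l1norm_nonneg btrain; positivity)
        linarith
end

section
/- Let X_1, …, X_n be independent real random variables with E[X_i] = 0 and E[|X_i|^p] < ∞ for all i, where 1 ≤ p ≤ 2. Then E[ | Σ_{i=1}^n X_i |^p ] ≤ 2 · Σ_{i=1}^n E[ |X_i|^p ]. -/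
/-!
For `1 ≤ p ≤ 2` and reals `x, y` one has
`|x + y| ^ p ≤ |x| ^ p + p * sgn x * |x| ^ (p - 1) * y + 2 * |y| ^ p`.
For `p > 1` the map `u ↦ sgn u * |u| ^ (p - 1)`, which is the derivative of `|u| ^ p / p`, is
`(p - 1)`-Hölder with constant `2`; hence the difference of the two sides along the segment
`t ↦ x + t * y` has nonnegative derivative for `t ≥ 0` and vanishes at `t = 0`.
Apply this to `x = X₁ + ⋯ + Xₖ` and `y = Xₖ₊₁`: by independence and `E Xₖ₊₁ = 0` the linear term
has expectation zero, so `E|Sₖ₊₁| ^ p ≤ E|Sₖ| ^ p + 2 E|Xₖ₊₁| ^ p`, and induction on `k` concludes.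
-/

open MeasureTheory ProbabilityTheory

noncomputable def signedRpow (α u : ℝ) : ℝ := if 0 ≤ u then u ^ α else -((-u) ^ α)

section SignedRpow

variable {α u v : ℝ}

lemma signedRpow_of_nonneg (hu : 0 ≤ u) : signedRpow α u = u ^ α := if_pos hu

lemma signedRpow_of_neg (hu : u < 0) : signedRpow α u = -((-u) ^ α) := if_neg hu.not_ge

lemma abs_signedRpow : |signedRpow α u| = |u| ^ α := by
  rcases le_or_gt 0 u with hu | hu
  · rw [signedRpow_of_nonneg hu, abs_of_nonneg hu, abs_of_nonneg (by positivity)]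
  · rw [signedRpow_of_neg hu, abs_neg, abs_of_neg hu,
      abs_of_nonneg (Real.rpow_nonneg (neg_nonneg.2 hu.le) _)]

lemma monotone_signedRpow (hα : 0 ≤ α) : Monotone (signedRpow α) := by
  intro v u hvu
  rcases le_or_gt 0 v with hv | hv
  · rw [signedRpow_of_nonneg hv, signedRpow_of_nonneg (hv.trans hvu)]
    exact Real.rpow_le_rpow hv hvu hα
  rw [signedRpow_of_neg hv]
  rcases le_or_gt 0 u with hu | hu
  · rw [signedRpow_of_nonneg hu]
    have := Real.rpow_nonneg (neg_nonneg.2 hv.le) α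
    have := Real.rpow_nonneg hu α
    linarith
  · rw [signedRpow_of_neg hu, neg_le_neg_iff]
    exact Real.rpow_le_rpow (by linarith) (by linarith) hα

lemma Real.rpow_sub_rpow_le_rpow_sub {a b : ℝ} (hb : 0 ≤ b) (hba : b ≤ a) (hα₀ : 0 ≤ α)
    (hα₁ : α ≤ 1) : a ^ α - b ^ α ≤ (a - b) ^ α := by
  have := Real.rpow_add_le_add_rpow (sub_nonneg.2 hba) hb hα₀ hα₁
  rw [sub_add_cancel] at this
  linarith

lemma signedRpow_sub_signedRpow_le (hα₀ : 0 ≤ α) (hα₁ : α ≤ 1) (hvu : v ≤ u) :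
    signedRpow α u - signedRpow α v ≤ 2 * (u - v) ^ α := by
  have hd := Real.rpow_nonneg (sub_nonneg.2 hvu) α
  rcases le_or_gt 0 v with hv | hv
  · rw [signedRpow_of_nonneg hv, signedRpow_of_nonneg (hv.trans hvu)]
    linarith [Real.rpow_sub_rpow_le_rpow_sub hv hvu hα₀ hα₁]
  rw [signedRpow_of_neg hv]
  rcases le_or_gt 0 u with hu | hu
  · rw [signedRpow_of_nonneg hu]
    have : u ^ α ≤ (u - v) ^ α := Real.rpow_le_rpow hu (by linarith) hα₀
    have : (-v) ^ α ≤ (u - v) ^ α := Real.rpow_le_rpow (by linarith) (by linarith) hα₀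
    linarith
  · rw [signedRpow_of_neg hu]
    have := Real.rpow_sub_rpow_le_rpow_sub (neg_nonneg.2 hu.le) (neg_le_neg hvu) hα₀ hα₁
    rw [neg_sub_neg] at this
    linarith

lemma abs_signedRpow_sub_signedRpow_le (hα₀ : 0 ≤ α) (hα₁ : α ≤ 1) :
    |signedRpow α u - signedRpow α v| ≤ 2 * |u - v| ^ α := by
  rcases le_total v u with h | h
  · rw [abs_of_nonneg (sub_nonneg.2 (monotone_signedRpow hα₀ h)),
      abs_of_nonneg (sub_nonneg.2 h)]
    exact signedRpow_sub_signedRpow_le hα₀ hα₁ h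
  · rw [abs_sub_comm, abs_of_nonneg (sub_nonneg.2 (monotone_signedRpow hα₀ h)), abs_sub_comm,
      abs_of_nonneg (sub_nonneg.2 h)]
    exact signedRpow_sub_signedRpow_le hα₀ hα₁ h

lemma hasDerivAt_abs_rpow_signedRpow {p : ℝ} (hp : 1 < p) (x : ℝ) :
    HasDerivAt (fun x : ℝ ↦ |x| ^ p) (p * signedRpow (p - 1) x) x := by
  convert hasDerivAt_abs_rpow x hp using 1
  have hp' : p - 1 = (p - 2) + 1 := by ring
  rcases lt_trichotomy x 0 with hx | rfl | hx
  · rw [signedRpow_of_neg hx, abs_of_neg hx, hp', Real.rpow_add_one (by linarith)]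
    ring
  · simp [signedRpow_of_nonneg, Real.zero_rpow (by linarith : p - 1 ≠ 0)]
  · rw [signedRpow_of_nonneg hx.le, abs_of_pos hx, hp', Real.rpow_add_one hx.ne']
    ring

end SignedRpow

lemma abs_add_le_abs_add_signedRpow_zero_mul (x y : ℝ) :
    |x + y| ≤ |x| + signedRpow 0 x * y + 2 * |y| := by
  have h : |signedRpow 0 x * y| = |y| := by rw [abs_mul, abs_signedRpow, Real.rpow_zero, one_mul]
  linarith [abs_add_le x y, neg_abs_le (signedRpow 0 x * y)]

lemma abs_add_rpow_le_of_one_lt {p : ℝ} (hp₁ : 1 < p) (hp₂ : p ≤ 2) (x y : ℝ) :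
    |x + y| ^ p ≤ |x| ^ p + p * signedRpow (p - 1) x * y + 2 * |y| ^ p := by
  set φ : ℝ → ℝ := fun t ↦ |x| ^ p + p * signedRpow (p - 1) x * y * t + 2 * |y| ^ p * t ^ p
    - |x + t * y| ^ p
  set φ' : ℝ → ℝ := fun t ↦ p * signedRpow (p - 1) x * y + 2 * |y| ^ p * (p * t ^ (p - 1))
    - p * signedRpow (p - 1) (x + t * y) * y
  have hφ : ∀ t, HasDerivAt φ (φ' t) t := by
    intro t
    have hline : HasDerivAt (fun t ↦ x + t * y) y t := by
      simpa using ((hasDerivAt_id t).mul_const y).const_add x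
    refine (((((hasDerivAt_id t).const_mul (p * signedRpow (p - 1) x * y)).const_add
      (|x| ^ p)).add ((Real.hasDerivAt_rpow_const (Or.inr hp₁.le)).const_mul (2 * |y| ^ p))).sub
      ((hasDerivAt_abs_rpow_signedRpow hp₁ _).comp t hline)).congr_deriv ?_
    simp only [φ', mul_one]
  have hφ'_nonneg : ∀ t, 0 ≤ t → 0 ≤ φ' t := by
    intro t ht
    have hα₀ : 0 ≤ p - 1 := by linarith
    have hα₁ : p - 1 ≤ 1 := by linarith
    have hy : |y| ^ (p - 1) * |y| = |y| ^ p := by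
      rw [← Real.rpow_add_one' (abs_nonneg y) (by linarith), sub_add_cancel]
    have hincr : (signedRpow (p - 1) (x + t * y) - signedRpow (p - 1) x) * y
        ≤ 2 * t ^ (p - 1) * |y| ^ p :=
      calc (signedRpow (p - 1) (x + t * y) - signedRpow (p - 1) x) * y
          ≤ |signedRpow (p - 1) (x + t * y) - signedRpow (p - 1) x| * |y| :=
            (le_abs_self _).trans_eq (abs_mul _ _)
        _ ≤ 2 * |t * y| ^ (p - 1) * |y| := by
            gcongr
            simpa using abs_signedRpow_sub_signedRpow_le (u := x + t * y) (v := x) hα₀ hα₁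
        _ = 2 * t ^ (p - 1) * |y| ^ p := by
            rw [abs_mul, abs_of_nonneg ht, Real.mul_rpow ht (abs_nonneg y), ← hy]
            ring
    have := mul_le_mul_of_nonneg_left hincr (zero_le_one.trans hp₁.le)
    simp only [φ']
    linarith
  have hmono : MonotoneOn φ (Set.Ici 0) :=
    monotoneOn_of_hasDerivWithinAt_nonneg (convex_Ici 0)
      (fun t _ ↦ (hφ t).continuousAt.continuousWithinAt)
      (fun t _ ↦ (hφ t).hasDerivWithinAt)
      (fun t ht ↦ hφ'_nonneg t (interior_subset ht))
  simpa [φ, Real.zero_rpow (by linarith : p ≠ 0)] using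
    hmono Set.self_mem_Ici (Set.mem_Ici.2 zero_le_one) zero_le_one

lemma abs_add_rpow_le {p : ℝ} (hp₁ : 1 ≤ p) (hp₂ : p ≤ 2) (x y : ℝ) :
    |x + y| ^ p ≤ |x| ^ p + p * signedRpow (p - 1) x * y + 2 * |y| ^ p := by
  rcases hp₁.eq_or_lt with rfl | hp₁
  · simpa using abs_add_le_abs_add_signedRpow_zero_mul x y
  · exact abs_add_rpow_le_of_one_lt hp₁ hp₂ x y

section Moments

variable {Ω : Type*} [MeasurableSpace Ω] {μ : Measure Ω} {p : ℝ}

lemma integrable_abs_rpow_iff_memLp {f : Ω → ℝ} (hf : AEStronglyMeasurable f μ) (hp : 0 < p) :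
    Integrable (fun ω ↦ |f ω| ^ p) μ ↔ MemLp f (ENNReal.ofReal p) μ := by
  simpa [ENNReal.toReal_ofReal hp.le] using
    integrable_norm_rpow_iff hf (p := ENNReal.ofReal p) (by simpa using hp) ENNReal.ofReal_ne_top

variable [IsFiniteMeasure μ]

lemma integral_abs_add_rpow_le (hp₁ : 1 ≤ p) (hp₂ : p ≤ 2) {S X : Ω → ℝ}
    (hS : Measurable S) (hX : Measurable X) (hSX : IndepFun S X μ)
    (hSp : MemLp S (ENNReal.ofReal p) μ) (hXp : MemLp X (ENNReal.ofReal p) μ)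
    (hX₀ : ∫ ω, X ω ∂μ = 0) :
    ∫ ω, |S ω + X ω| ^ p ∂μ ≤ ∫ ω, |S ω| ^ p ∂μ + 2 * ∫ ω, |X ω| ^ p ∂μ := by
  have hp₀ : 0 < p := by linarith
  have hα : 0 ≤ p - 1 := by linarith
  set D : Ω → ℝ := fun ω ↦ p * signedRpow (p - 1) (S ω)
  have hD : Measurable D := measurable_const.mul ((monotone_signedRpow hα).measurable.comp hS)
  have hSp' := (integrable_abs_rpow_iff_memLp hS.aestronglyMeasurable hp₀).2 hSp
  have hXp' := (integrable_abs_rpow_iff_memLp hX.aestronglyMeasurable hp₀).2 hXp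
  have hDint : Integrable D μ := by
    refine ((integrable_norm_rpow_of_le hS.aestronglyMeasurable hα hp₀.le (by linarith)
      hSp').const_mul p).mono' hD.aestronglyMeasurable (ae_of_all _ fun ω ↦ ?_)
    simp [D, abs_signedRpow, abs_of_pos hp₀]
  have hDX : IndepFun D X μ :=
    hSX.comp (measurable_const.mul (monotone_signedRpow hα).measurable) measurable_id
  have hXint : Integrable X μ := hXp.integrable (ENNReal.one_le_ofReal.2 hp₁)
  have hDXint : Integrable (fun ω ↦ D ω * X ω) μ := hDX.integrable_mul hDint hXint
  have hDX₀ : ∫ ω, D ω * X ω ∂μ = 0 := by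
    simpa [hX₀] using hDX.integral_mul_eq_mul_integral hD.aestronglyMeasurable
      hX.aestronglyMeasurable
  have hlin : Integrable (fun ω ↦ |S ω| ^ p + D ω * X ω) μ := hSp'.add hDXint
  calc ∫ ω, |S ω + X ω| ^ p ∂μ
      ≤ ∫ ω, (|S ω| ^ p + D ω * X ω + 2 * |X ω| ^ p) ∂μ :=
        integral_mono ((integrable_abs_rpow_iff_memLp (hS.add hX).aestronglyMeasurable hp₀).2
          (hSp.add hXp)) (hlin.add (hXp'.const_mul 2))
          fun ω ↦ abs_add_rpow_le hp₁ hp₂ (S ω) (X ω)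
    _ = ∫ ω, |S ω| ^ p ∂μ + 2 * ∫ ω, |X ω| ^ p ∂μ := by
        rw [integral_add hlin (hXp'.const_mul 2), integral_add hSp' hDXint,
          integral_const_mul, hDX₀, add_zero]

end Moments

lemma integral_abs_sum_rpow_le {Ω ι : Type*} [MeasurableSpace Ω] {μ : Measure Ω} {p : ℝ}
    (hp₁ : 1 ≤ p) (hp₂ : p ≤ 2) {X : ι → Ω → ℝ} (hX : ∀ i, Measurable (X i))
    (hindep : iIndepFun X μ) (hX₀ : ∀ i, ∫ ω, X i ω ∂μ = 0)
    (hXp : ∀ i, MemLp (X i) (ENNReal.ofReal p) μ) (s : Finset ι) :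
    ∫ ω, |∑ i ∈ s, X i ω| ^ p ∂μ ≤ 2 * ∑ i ∈ s, ∫ ω, |X i ω| ^ p ∂μ := by
  have := hindep.isProbabilityMeasure
  induction s using Finset.cons_induction with
  | empty => simp [Real.zero_rpow (by linarith : p ≠ 0)]
  | cons a s ha ih =>
    have hSX : IndepFun (fun ω ↦ ∑ i ∈ s, X i ω) (X a) μ := by
      simpa only [Finset.sum_fn] using hindep.indepFun_finsetSum_of_notMem hX ha
    have hstep := integral_abs_add_rpow_le hp₁ hp₂ (Finset.measurable_sum s fun i _ ↦ hX i)
      (hX a) hSX (memLp_finsetSum s fun i _ ↦ hXp i) (hXp a) (hX₀ a)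
    simp only [Finset.sum_cons, add_comm (X a _)]
    linarith

theorem von_bahr_esseen_general
    {Ω : Type*} [MeasurableSpace Ω] (P : Measure Ω)
    (n : ℕ) (X : Fin n → Ω → ℝ) (hmeas : ∀ i, Measurable (X i))
    (hindep : iIndepFun X P)
    (p : ℝ) (hp1 : 1 ≤ p) (hp2 : p ≤ 2)
    (hmean : ∀ i, ∫ ω, X i ω ∂P = 0)
    (hmom : ∀ i, Integrable (fun ω => |X i ω| ^ p) P) :
    ∫ ω, |∑ i, X i ω| ^ p ∂P ≤ 2 * ∑ i, ∫ ω, |X i ω| ^ p ∂P :=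
  integral_abs_sum_rpow_le hp1 hp2 hmeas hindep hmean
    (fun i ↦ (integrable_abs_rpow_iff_memLp (hmeas i).aestronglyMeasurable
      (by linarith)).1 (hmom i)) Finset.univ

/-- von Bahr–Esseen inequality: for independent centered real random
variables `X_1, …, X_n` with finite `p`-th absolute moments, `1 ≤ p ≤ 2`,
`E|Σ X_i|^p ≤ 2 Σ E|X_i|^p`. -/
theorem von_bahr_esseen
    {Ω : Type*} [MeasurableSpace Ω] (P : Measure Ω) [IsProbabilityMeasure P]
    (n : ℕ) (X : Fin n → Ω → ℝ) (hmeas : ∀ i, Measurable (X i))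
    (hindep : iIndepFun X P)
    (p : ℝ) (hp1 : 1 ≤ p) (hp2 : p ≤ 2)
    (hmean : ∀ i, ∫ ω, X i ω ∂P = 0)
    (hmom : ∀ i, Integrable (fun ω => |X i ω| ^ p) P) :
    ∫ ω, |∑ i, X i ω| ^ p ∂P ≤ 2 * ∑ i, ∫ ω, |X i ω| ^ p ∂P :=
  von_bahr_esseen_general P n X hmeas hindep p hp1 hp2 hmean hmom
end
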